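/- Let L be a divisorial principally generated C-lattice lattice domain, let a ∈ L with a ≠ 0 and a ≠ 1, and let p be a maximal element of L with a ≤ p. Then ⋀ { b ∈ L | a ≤ b and b ≰ p } ≰ p; that is, there exists a smallest element a(p) of L satisfying a ≤ a(p) and a(p) ≰ p. -/

import Mathlib

/-- A multiplicative lattice: a complete lattice (bottom `⊥` playing the role of `0`)
which is a commutative monoid whose identity `1` is the top element, and in which
multiplication distributes over arbitrary joins. -/
class MulLattice (L : Type*) extends CompleteLattice L, CommMonoid L where
  one_eq_top : (1 : L) = ⊤
  mul_sSup : ∀ (a : L) (S : Set L), a * sSup S = ⨆ b ∈ S, a * b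

namespace MulLattice

variable {L : Type*} [MulLattice L]

/-- The residual `(y : x) = ⋁ {a | a * x ≤ y}`. -/
def res (y x : L) : L := sSup {a : L | a * x ≤ y}

/-- `x` is meet-principal: `y ⊓ z * x = ((y : x) ⊓ z) * x` for all `y, z`. -/
def IsMeetPrincipal (x : L) : Prop := ∀ y z : L, y ⊓ z * x = (res y x ⊓ z) * x

/-- `x` is join-principal: `y ⊔ (z : x) = ((y * x ⊔ z) : x)` for all `y, z`. -/
def IsJoinPrincipal (x : L) : Prop := ∀ y z : L, y ⊔ res z x = res (y * x ⊔ z) x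

/-- `x` is principal if it is both meet-principal and join-principal. -/
def IsPrincipal (x : L) : Prop := IsMeetPrincipal x ∧ IsJoinPrincipal x

/-- A prime element: a proper element `p` with `x * y ≤ p → x ≤ p ∨ y ≤ p`. -/
def IsPrime (p : L) : Prop := p ≠ 1 ∧ ∀ x y : L, x * y ≤ p → x ≤ p ∨ y ≤ p

/-- A maximal element: an element maximal in `L - {1}`. -/
def IsMaximal (m : L) : Prop := m ≠ 1 ∧ ∀ b : L, m < b → b = 1

end MulLattice

/-- A principally generated C-lattice: a multiplicative lattice in which `1` is compact,
compact elements are closed under multiplication, every element is a join of compact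
elements and every element is a join of principal elements. -/
class PGCLattice (L : Type*) extends MulLattice L where
  top_isCompact : IsCompactElement (⊤ : L)
  compact_mul : ∀ a b : L, IsCompactElement a →
    IsCompactElement b → IsCompactElement (a * b)
  compactly_generated : ∀ a : L,
    a = sSup {c : L | IsCompactElement c ∧ c ≤ a}
  principally_generated : ∀ a : L,
    a = sSup {x : L | MulLattice.IsPrincipal x ∧ x ≤ a}

namespace MulLattice

variable {L : Type*}

/-- A lattice domain: `0 = ⊥` is a prime element. -/
def IsLatticeDomain (L : Type*) [MulLattice L] : Prop := IsPrime (⊥ : L)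

variable [PGCLattice L]

open Classical in
/-- The divisorial (`v`-)closure of `a`: equals `(x : (x : a))` for a nonzero principal
`x ≤ a` when such an `x` exists (in a lattice domain this is independent of the choice
of `x`), and `⊥` otherwise (in particular `vclos ⊥ = ⊥`). -/
noncomputable def vclos (a : L) : L :=
  if h : ∃ x : L, IsPrincipal x ∧ x ≠ ⊥ ∧ x ≤ a then
    res h.choose (res h.choose a)
  else ⊥

/-- `a` is divisorial if `a = a_v`. -/
def IsDivisorial (a : L) : Prop := vclos a = a

/-- `L` is h-local: every nonzero prime is below a unique maximal element and
every nonzero element is below only finitely many maximal elements. -/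
def IsHLocal (L : Type*) [PGCLattice L] : Prop :=
  (∀ r : L, r ≠ ⊥ → IsPrime r → ∃! m : L, IsMaximal m ∧ r ≤ m) ∧
  (∀ b : L, b ≠ ⊥ → {m : L | IsMaximal m ∧ b ≤ m}.Finite)

end MulLattice

/-!
Fix a nonzero principal `x ≤ a`. In a divisorial lattice domain every `e ≥ x` satisfies
`e = (x : (x : e))`, whatever the principal `x` is. The set `S = {b | a ≤ b, b ≰ p}` is closed
under finite meets because `p` is prime, so `⋀ S = (x : J)` with `J = ⋁_{b ∈ S} (x : b)` a
directed join, and then `(x : ⋀ S) = J`. If `⋀ S ≤ p`, pick a compact `w ≤ (x : p)` with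
`w ≰ x` (it exists since `(x : p) = x` would force `p = (x : x) = 1`). Then `w ≤ J`, so by
compactness `w ≤ (x : b)` for one `b ∈ S`; now `(x : w)` lies above both `p` and `b ≰ p`,
hence equals `1` by maximality, i.e. `w ≤ x`, a contradiction.
-/

open MulLattice

namespace MulLattice

open Quantale

section MulLattice

variable {L : Type*} [MulLattice L]

instance : IsQuantale L where
  mul_sSup_distrib := MulLattice.mul_sSup
  sSup_mul_distrib s y := by simp only [mul_comm _ y]; exact MulLattice.mul_sSup y s

lemma le_one (a : L) : a ≤ 1 := one_eq_top (L := L) ▸ le_top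

lemma mul_le_left (a b : L) : a * b ≤ a := mul_le_of_le_one_right' (le_one b)

lemma mul_le_right (a b : L) : a * b ≤ b := mul_le_of_le_one_left' (le_one a)

lemma le_res_iff {a y x : L} : a ≤ res y x ↔ a * x ≤ y := leftMulResiduation_le_iff_mul_le

lemma le_res_comm {a y x : L} : a ≤ res y x ↔ x ≤ res y a := by
  rw [le_res_iff, le_res_iff, mul_comm]

lemma res_mul_le (y x : L) : res y x * x ≤ y := le_res_iff.1 le_rfl

lemma res_anti {x x' : L} (h : x ≤ x') (y : L) : res y x' ≤ res y x :=
  le_res_iff.2 ((mul_le_mul_right h _).trans (res_mul_le y x'))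

lemma le_res_left (y x : L) : y ≤ res y x := le_res_iff.2 (mul_le_left y x)

lemma le_res_res (x e : L) : e ≤ res x (res x e) := le_res_comm.1 le_rfl

lemma res_self (x : L) : res x x = 1 :=
  (le_one _).antisymm (le_res_iff.2 (one_mul x).le)

lemma res_bot_right (y : L) : res y ⊥ = 1 :=
  (le_one _).antisymm (le_res_iff.2 (by simp))

lemma res_sSup (y : L) (S : Set L) : res y (sSup S) = ⨅ z ∈ S, res y z :=
  le_antisymm (le_iInf₂ fun _ hz => res_anti (le_sSup hz) y) <| by
    rw [le_res_iff, mul_sSup_distrib]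
    exact iSup₂_le fun z hz => le_res_iff.1 (iInf₂_le z hz)

lemma sInf_eq_res_sSup_image_res {x : L} {S : Set L} (hS : ∀ b ∈ S, res x (res x b) = b) :
    sInf S = res x (sSup ((res x ·) '' S)) := by
  rw [res_sSup, iInf_image, sInf_eq_iInf]
  exact iInf_congr fun b => iInf_congr fun hb => (hS b hb).symm

lemma IsMeetPrincipal.res_mul_self {z : L} (hz : IsMeetPrincipal z) (y : L) :
    res y z * z = y ⊓ z := by
  have h := hz y 1
  rwa [one_mul, inf_eq_left.2 (le_one (res y z)), eq_comm] at h

lemma IsMaximal.isPrime {p : L} (hp : IsMaximal p) : IsPrime p := by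
  refine ⟨hp.1, fun u v huv => or_iff_not_imp_left.2 fun hu => ?_⟩
  have hpu : p ⊔ u = 1 := hp.2 _ (left_lt_sup.2 hu)
  calc v = v * (p ⊔ u) := by rw [hpu, mul_one]
    _ = v * p ⊔ u * v := by rw [mul_sup_distrib, mul_comm v u]
    _ ≤ p := sup_le (mul_le_right v p) huv

lemma IsPrime.not_inf_le {p b₁ b₂ : L} (hp : IsPrime p) (h₁ : ¬ b₁ ≤ p) (h₂ : ¬ b₂ ≤ p) :
    ¬ b₁ ⊓ b₂ ≤ p := fun h =>
  (hp.2 b₁ b₂ ((le_inf (mul_le_left b₁ b₂) (mul_le_right b₁ b₂)).trans h)).elim h₁ h₂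

lemma IsMaximal.le_of_le_res {p b w x : L} (hp : IsMaximal p) (hb : ¬ b ≤ p)
    (hwp : w ≤ res x p) (hwb : w ≤ res x b) : w ≤ x := by
  have hpw : p < res x w :=
    lt_of_le_not_ge (le_res_comm.1 hwp) fun h => hb ((le_res_comm.1 hwb).trans h)
  simpa [hp.2 _ hpw] using res_mul_le x w

lemma res_bot_left (hL : IsLatticeDomain L) {x : L} (hx : x ≠ ⊥) : res (⊥ : L) x = ⊥ :=
  le_bot_iff.1 <| sSup_le fun _ hu =>
    (hL.2 _ x hu).resolve_right fun h => hx (le_bot_iff.1 h)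

lemma IsJoinPrincipal.res_mul_cancel (hL : IsLatticeDomain L) {z : L}
    (hz : IsJoinPrincipal z) (hz0 : z ≠ ⊥) (y : L) : res (y * z) z = y := by
  simpa [res_bot_left hL hz0] using (hz y ⊥).symm

/-- In a ring `(w : z) = w z⁻¹ ∩ R` is an intersection of principal fractional ideals, hence
divisorial; this is what makes `a_v` independent of the chosen principal element. -/
lemma res_res_res_le_of_mul_le (hL : IsLatticeDomain L) {x w z : L}
    (hx : IsJoinPrincipal x) (hx0 : x ≠ ⊥) (hw : IsMeetPrincipal w)
    (hz : IsPrincipal z) (hz0 : z ≠ ⊥) (hxz : x * z ≤ w) :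
    res x (res x (res w z)) ≤ res w z := by
  set g := res w z
  set u := res (x * z) w
  set t := res x (res x g)
  have hug : u ≤ res x g := by
    rw [le_res_iff, ← hz.2.res_mul_cancel hL hz0 x, le_res_iff, mul_assoc,
      hz.1.res_mul_self w]
    exact (mul_le_mul_right inf_le_left u).trans (res_mul_le _ _)
  have htu : t * u ≤ x := (mul_le_mul_right hug t).trans (res_mul_le x _)
  have huw : u * w = x * z := by rw [hw.res_mul_self, inf_eq_left.2 hxz]
  rw [le_res_iff, ← hx.res_mul_cancel hL hx0 w, le_res_iff]
  calc t * z * x = t * u * w := by rw [mul_assoc t u, huw, mul_assoc, mul_comm z]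
    _ ≤ w * x := by rw [mul_comm w]; exact mul_le_mul_left htu w

end MulLattice

section PGCLattice

variable {L : Type*} [PGCLattice L]

lemma exists_isPrincipal_ne_bot_le {a : L} (ha : a ≠ ⊥) :
    ∃ x : L, IsPrincipal x ∧ x ≠ ⊥ ∧ x ≤ a := by
  by_contra! h
  refine ha (le_bot_iff.1 ?_)
  rw [PGCLattice.principally_generated a]
  exact sSup_le fun z hz => le_bot_iff.2 (by_contra fun hz0 => h z hz.1 hz0 hz.2)

lemma res_res_le_res_res (hL : IsLatticeDomain L) {e x x' : L}
    (hx : IsJoinPrincipal x) (hx0 : x ≠ ⊥) (hxe : x ≤ e) (hx' : IsMeetPrincipal x') :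
    res x (res x e) ≤ res x' (res x' e) := by
  rw [PGCLattice.principally_generated (res x' e), res_sSup]
  refine le_iInf₂ fun z ⟨hz, hze⟩ => ?_
  rcases eq_or_ne z ⊥ with rfl | hz0
  · exact (res_bot_right x').symm ▸ le_one _
  have hez : e ≤ res x' z := le_res_comm.1 hze
  calc res x (res x e) ≤ res x (res x (res x' z)) := res_anti (res_anti hez x) x
    _ ≤ res x' z := res_res_res_le_of_mul_le hL hx hx0 hx' hz hz0
        (le_res_iff.1 (hxe.trans hez))

lemma res_res_eq_of_isDivisorial (hL : IsLatticeDomain L) {e x : L} (he : IsDivisorial e)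
    (hx : IsPrincipal x) (hx0 : x ≠ ⊥) (hxe : x ≤ e) : res x (res x e) = e := by
  have hex : ∃ y : L, IsPrincipal y ∧ y ≠ ⊥ ∧ y ≤ e := ⟨x, hx, hx0, hxe⟩
  rw [IsDivisorial, vclos, dif_pos hex] at he
  refine le_antisymm ?_ (le_res_res x e)
  calc res x (res x e) ≤ _ := res_res_le_res_res hL hx.2 hx0 hxe hex.choose_spec.1.1
    _ = e := he

lemma exists_isCompactElement_le_res_not_le (hL : IsLatticeDomain L) {x p : L}
    (hpdiv : IsDivisorial p) (hx : IsPrincipal x) (hx0 : x ≠ ⊥) (hxp : x ≤ p) (hp : p ≠ 1) :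
    ∃ w : L, IsCompactElement w ∧ w ≤ res x p ∧ ¬ w ≤ x := by
  by_contra! h
  have hpx : res x p ≤ x := by
    rw [PGCLattice.compactly_generated (res x p)]
    exact sSup_le fun w hw => h w hw.1 hw.2
  apply hp
  rw [← res_res_eq_of_isDivisorial hL hpdiv hx hx0 hxp,
    hpx.antisymm (le_res_left x p), res_self]

theorem not_sInf_le_of_isMaximal (hL : IsLatticeDomain L) (hdiv : ∀ a : L, IsDivisorial a)
    {x p : L} {S : Set L} (hx : IsPrincipal x) (hx0 : x ≠ ⊥) (hp : IsMaximal p)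
    (hxp : x ≤ p) (hxS : ∀ b ∈ S, x ≤ b) (hSne : S.Nonempty)
    (hS : DirectedOn (· ≥ ·) S) (hSp : ∀ b ∈ S, ¬ b ≤ p) : ¬ sInf S ≤ p := by
  set J := sSup ((res x ·) '' S)
  have hSJ : sInf S = res x J := sInf_eq_res_sSup_image_res fun b hb =>
    res_res_eq_of_isDivisorial hL (hdiv b) hx hx0 (hxS b hb)
  have hxJ : x ≤ J := by
    obtain ⟨b, hb⟩ := hSne
    exact (le_res_left x b).trans (le_sSup ⟨b, hb, rfl⟩)
  have hJ : res x (sInf S) = J := hSJ ▸ res_res_eq_of_isDivisorial hL (hdiv J) hx hx0 hxJ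
  have hJdir : DirectedOn (· ≤ ·) ((res x ·) '' S) :=
    directedOn_image.2 (hS.mono fun _ _ h => res_anti h x)
  intro hSp'
  obtain ⟨w, hwc, hwp, hwx⟩ := exists_isCompactElement_le_res_not_le hL (hdiv p) hx hx0 hxp hp.1
  have hwJ : w ≤ J := hJ ▸ hwp.trans (res_anti hSp' x)
  obtain ⟨_, ⟨b, hb, rfl⟩, hwb⟩ :=
    (CompleteLattice.isCompactElement_iff_le_of_directed_sSup_le (k := w)).1 hwc _
      (hSne.image _) hJdir hwJ
  exact hwx (hp.le_of_le_res (hSp b hb) hwp hwb)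

end PGCLattice

end MulLattice

theorem stmt12_general {L : Type*} [PGCLattice L] (hL : IsLatticeDomain L)
    (hdiv : ∀ a : L, IsDivisorial a)
    (a p : L) (ha0 : a ≠ ⊥) (hp : IsMaximal p) (hap : a ≤ p) :
    ¬ sInf {b : L | a ≤ b ∧ ¬ b ≤ p} ≤ p ∧
      ∃ c : L, (a ≤ c ∧ ¬ c ≤ p) ∧ ∀ b : L, a ≤ b → ¬ b ≤ p → c ≤ b := by
  set S := {b : L | a ≤ b ∧ ¬ b ≤ p}
  obtain ⟨x, hx, hx0, hxa⟩ := exists_isPrincipal_ne_bot_le ha0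
  have hS : DirectedOn (· ≥ ·) S := fun b₁ hb₁ b₂ hb₂ =>
    ⟨b₁ ⊓ b₂, ⟨le_inf hb₁.1 hb₂.1, hp.isPrime.not_inf_le hb₁.2 hb₂.2⟩, inf_le_left, inf_le_right⟩
  have hone : (1 : L) ∈ S := ⟨le_one a, fun h => hp.1 ((le_one p).antisymm h)⟩
  have hmain : ¬ sInf S ≤ p := not_sInf_le_of_isMaximal hL hdiv hx hx0 hp (hxa.trans hap)
    (fun b hb => hxa.trans hb.1) ⟨1, hone⟩ hS fun b hb => hb.2
  exact ⟨hmain, sInf S, ⟨le_sInf fun b hb => hb.1, hmain⟩, fun b hab hbp => sInf_le ⟨hab, hbp⟩⟩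

theorem stmt12 {L : Type*} [PGCLattice L] (hL : IsLatticeDomain L)
    (hdiv : ∀ a : L, IsDivisorial a)
    (a p : L) (ha0 : a ≠ ⊥) (ha1 : a ≠ 1) (hp : IsMaximal p) (hap : a ≤ p) :
    ¬ sInf {b : L | a ≤ b ∧ ¬ b ≤ p} ≤ p ∧
      ∃ c : L, (a ≤ c ∧ ¬ c ≤ p) ∧ ∀ b : L, a ≤ b → ¬ b ≤ p → c ≤ b :=
  stmt12_general hL hdiv a p ha0 hp hap
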